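/- arXiv:2412.01722 — 2 statements merged into one kernel-verified Lean document; each statement's English description precedes it below -/
import Mathlib

section
/- Let A be a bounded lattice with a subordination relation ≺ and canonical extension A^δ, and let ◇a = ⋀{b ∈ A | a ≺ b}. Extend ◇ to closed elements by ◇^σ k = ⋀{◇a | a ∈ A, k ≤ a}. Then for any closed element k and any b ∈ A, if ◇^σ k ≤ b then there exists a ∈ A with k ≤ a and a ≺ b. -/
variable {α : Type*} [CompleteLattice α]

/-- An element is closed if it is the meet of a nonempty subset of S. -/
def IsClosedElem (S : Set α) (k : α) : Prop :=
  ∃ F : Set α, F ⊆ S ∧ F.Nonempty ∧ k = sInf F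

/-- An element is open if it is the join of a nonempty subset of S. -/
def IsOpenElem (S : Set α) (o : α) : Prop :=
  ∃ I : Set α, I ⊆ S ∧ I.Nonempty ∧ o = sSup I

/-- S is dense: every element is a join of closed elements and a meet of open elements. -/
def IsDenseSub (S : Set α) : Prop :=
  ∀ u : α, u = sSup {k | IsClosedElem S k ∧ k ≤ u} ∧
           u = sInf {o | IsOpenElem S o ∧ u ≤ o}

/-- S is compact. -/
def IsCompactSub (S : Set α) : Prop :=
  ∀ F I : Set α, F ⊆ S → I ⊆ S → F.Nonempty → I.Nonempty → sInf F ≤ sSup I →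
    ∃ a ∈ F, ∃ b ∈ I, a ≤ b

/-- S is a bounded sublattice. -/
def IsBoundedSublattice (S : Set α) : Prop :=
  ⊥ ∈ S ∧ ⊤ ∈ S ∧ ∀ a ∈ S, ∀ b ∈ S, a ⊔ b ∈ S ∧ a ⊓ b ∈ S

/-- A subordination relation on the sublattice S. -/
def IsSubordination (S : Set α) (R : α → α → Prop) : Prop :=
  R ⊥ ⊥ ∧ R ⊤ ⊤ ∧
  (∀ a ∈ S, ∀ b ∈ S, ∀ c ∈ S, R a b → R a c → R a (b ⊓ c)) ∧
  (∀ a ∈ S, ∀ b ∈ S, ∀ c ∈ S, R a c → R b c → R (a ⊔ b) c) ∧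
  (∀ a ∈ S, ∀ b ∈ S, ∀ c ∈ S, ∀ d ∈ S, a ≤ b → R b c → c ≤ d → R a d)

/-- The slanted diamond on elements of S. -/
def diaA (S : Set α) (R : α → α → Prop) (a : α) : α :=
  sInf {b | b ∈ S ∧ R a b}

/-- The sigma-extension of the diamond to closed elements. -/
def diaK (S : Set α) (R : α → α → Prop) (k : α) : α :=
  sInf (diaA S R '' {a | a ∈ S ∧ k ≤ a})

/-! `diaK S R k` dominates the meet of all `c ∈ S` with `a ≺ c` for some `a ∈ S` above `k`.
This family contains `⊤`, so compactness of `S` against the single element `b` yields such a `c`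
with `c ≤ b`, and then `a ≺ c ≤ b` gives `a ≺ b` by (S4). -/

theorem sInf_subordinates_le_diaK (S : Set α) (R : α → α → Prop) (k : α) :
    sInf {c | c ∈ S ∧ ∃ a ∈ S, k ≤ a ∧ R a c} ≤ diaK S R k :=
  le_sInf <| by
    rintro _ ⟨a, ⟨haS, hka⟩, rfl⟩
    exact le_sInf fun c ⟨hcS, hac⟩ => sInf_le ⟨hcS, a, haS, hka, hac⟩

theorem IsCompactSub.exists_le_of_sInf_le {S F : Set α} {b : α} (hc : IsCompactSub S)
    (h : sInf F ≤ b) (hFS : F ⊆ S) (hF : F.Nonempty) (hb : b ∈ S) : ∃ c ∈ F, c ≤ b := by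
  obtain ⟨c, hcF, b', rfl, hcb⟩ :=
    hc F {b} hFS (Set.singleton_subset_iff.2 hb) hF (Set.singleton_nonempty b) (by rwa [sSup_singleton])
  exact ⟨c, hcF, hcb⟩

theorem stmt14_general (S : Set α) (hS : IsBoundedSublattice S)
    (hc : IsCompactSub S) (R : α → α → Prop) (hR : IsSubordination S R)
    (k b : α) (hb : b ∈ S)
    (h : diaK S R k ≤ b) :
    ∃ a ∈ S, k ≤ a ∧ R a b := by
  obtain ⟨-, htop, -⟩ := hS
  obtain ⟨-, hRtop, -, -, hmono⟩ := hR
  obtain ⟨c, ⟨hcS, a, haS, hka, hac⟩, hcb⟩ :=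
    hc.exists_le_of_sInf_le ((sInf_subordinates_le_diaK S R k).trans h) (fun c hc => hc.1)
      ⟨⊤, htop, ⊤, htop, le_top, hRtop⟩ hb
  exact ⟨a, haS, hka, hmono a haS a haS c hcS b hb le_rfl hac hcb⟩

theorem stmt14 (S : Set α) (hS : IsBoundedSublattice S) (hd : IsDenseSub S)
    (hc : IsCompactSub S) (R : α → α → Prop) (hR : IsSubordination S R)
    (k b : α) (hk : IsClosedElem S k) (hb : b ∈ S)
    (h : diaK S R k ≤ b) :
    ∃ a ∈ S, k ≤ a ∧ R a b :=
  stmt14_general S hS hc R hR k b hb h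
end

section
/- Let A be a bounded lattice with a subordination relation ≺ and canonical extension A^δ, and define ■a = ⋁{b ∈ A | b ≺ a}. Extend ■ to open elements by ■^π o = ⋁{■a | a ∈ A, a ≤ o}. Then for any open element o and any a ∈ A, if a ≤ ■^π o then there exists b ∈ A with b ≤ o and a ≺ b. -/
/-!
Compactness, applied to the single element `a` and the family of all `b ∈ S` with `b ≺ c` for
some `c ∈ S` below `o` (whose join dominates `■^π o`), yields one such `b` above `a`; then (S4)
turns `a ≤ b ≺ c` into `a ≺ c`. If that family is empty, then
`a = ⊥`, and `⊥ ≺ ⊥` is part of (S1).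
-/

variable {α : Type*} [CompleteLattice α]

/-- The slanted box on elements of S. -/
def boxA (S : Set α) (R : α → α → Prop) (a : α) : α :=
  sSup {b | b ∈ S ∧ R b a}

/-- The pi-extension of the box to open elements. -/
def boxO (S : Set α) (R : α → α → Prop) (o : α) : α :=
  sSup (boxA S R '' {a | a ∈ S ∧ a ≤ o})

def subordinatesBelow (S : Set α) (R : α → α → Prop) (o : α) : Set α :=
  {b | b ∈ S ∧ ∃ c ∈ S, c ≤ o ∧ R b c}

theorem subordinatesBelow_subset (S : Set α) (R : α → α → Prop) (o : α) :
    subordinatesBelow S R o ⊆ S :=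
  fun _ hb => hb.1

theorem boxO_le_sSup_subordinatesBelow (S : Set α) (R : α → α → Prop) (o : α) :
    boxO S R o ≤ sSup (subordinatesBelow S R o) := by
  refine sSup_le ?_
  rintro _ ⟨c, ⟨hcS, hco⟩, rfl⟩
  exact sSup_le fun b ⟨hbS, hbc⟩ => le_sSup ⟨hbS, c, hcS, hco, hbc⟩

theorem IsCompactSub.exists_le_of_le_sSup {S I : Set α} (hc : IsCompactSub S) {a : α}
    (ha : a ∈ S) (hIS : I ⊆ S) (hI : I.Nonempty) (h : a ≤ sSup I) : ∃ b ∈ I, a ≤ b := by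
  obtain ⟨a', rfl, b, hb, hab⟩ :=
    hc {a} I (Set.singleton_subset_iff.2 ha) hIS (Set.singleton_nonempty a) hI
      (by rwa [sInf_singleton])
  exact ⟨b, hb, hab⟩

theorem stmt15_general (S : Set α)
    (hc : IsCompactSub S) (R : α → α → Prop) (hR : IsSubordination S R)
    (o a : α) (ha : a ∈ S)
    (h : a ≤ boxO S R o) :
    ∃ b ∈ S, b ≤ o ∧ R a b := by
  obtain ⟨hbot, -, -, -, hmono⟩ := hR
  have hle := h.trans (boxO_le_sSup_subordinatesBelow S R o)
  rcases (subordinatesBelow S R o).eq_empty_or_nonempty with hU | hU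
  · rw [hU, sSup_empty, le_bot_iff] at hle
    subst hle
    exact ⟨⊥, ha, bot_le, hbot⟩
  · obtain ⟨b, ⟨hbS, c, hcS, hco, hbc⟩, hab⟩ :=
      hc.exists_le_of_le_sSup ha (subordinatesBelow_subset S R o) hU hle
    exact ⟨c, hcS, hco, hmono a ha b hbS c hcS c hcS hab hbc le_rfl⟩

theorem stmt15 (S : Set α) (hS : IsBoundedSublattice S) (hd : IsDenseSub S)
    (hc : IsCompactSub S) (R : α → α → Prop) (hR : IsSubordination S R)
    (o a : α) (ho : IsOpenElem S o) (ha : a ∈ S)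
    (h : a ≤ boxO S R o) :
    ∃ b ∈ S, b ≤ o ∧ R a b :=
  stmt15_general S hc R hR o a ha h
end
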